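/- arXiv:1805.05565 — 3 statements merged into one kernel-verified Lean document; each statement's English description precedes it below -/
import Mathlib

section
/- Let A, E be symmetric n×n real matrices with eigenvalues λ_1 ≤ ⋯ ≤ λ_n of A and μ_1 ≤ ⋯ ≤ μ_n of A + E (each listed in increasing order with multiplicity). Then ∑_{j=1}^n (λ_j − μ_j)² ≤ ‖E‖_F². -/
open Matrix

attribute [local instance] Matrix.frobeniusNormedAddCommGroup

/-- Rearrangement: for monotone `lam`, `mu`, the identity permutation minimizes
`∑ (lam (σ j) - mu j)^2`. -/
lemma hw_rearrange {n : ℕ} (lam mu : Fin n → ℝ) (hlam : Monotone lam) (hmu : Monotone mu)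
    (σ : Equiv.Perm (Fin n)) :
    ∑ j, (lam j - mu j) ^ 2 ≤ ∑ j, (lam (σ j) - mu j) ^ 2 := by
  have h1 : ∑ j, (lam (σ j)) ^ 2 = ∑ j, (lam j) ^ 2 :=
    Equiv.sum_comp σ (fun j => (lam j) ^ 2)
  have h2 : ∑ j, mu j * lam (σ j) ≤ ∑ j, mu j * lam j :=
    (hmu.monovary hlam).sum_mul_comp_perm_le_sum_mul
  have e1 : ∀ (τ : Fin n → Fin n), ∑ j, (lam (τ j) - mu j) ^ 2
      = ∑ j, ((lam (τ j)) ^ 2 + (mu j) ^ 2 - 2 * (mu j * lam (τ j))) := by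
    intro τ; apply Finset.sum_congr rfl; intro j _; ring
  have eid : ∑ j, (lam j - mu j) ^ 2
      = ∑ j, ((lam j) ^ 2 + (mu j) ^ 2 - 2 * (mu j * lam j)) :=
    Finset.sum_congr rfl fun j _ => by ring
  rw [eid, e1 σ]
  simp only [Finset.sum_sub_distrib, Finset.sum_add_distrib, ← Finset.mul_sum, h1]
  linarith

/-- Frobenius-type sum of squares as a trace. -/
lemma hw_sum_sq_eq_trace {n : ℕ} (X : Matrix (Fin n) (Fin n) ℝ) :
    ∑ i, ∑ j, (X i j) ^ 2 = Matrix.trace (Xᴴ * X) := by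
  simp only [Matrix.trace, Matrix.diag, Matrix.mul_apply, Matrix.conjTranspose_apply,
    star_trivial, sq]
  exact Finset.sum_comm

/-- Hoffman–Wielandt-type bound (Horn–Johnson, Cor 6.3.8): if `A` and `E` are symmetric
and `lam`, `mu` enumerate the eigenvalues of `A` and `A + E` respectively in increasing
order (with multiplicity), then `∑ j (lam j - mu j)² ≤ ‖E‖_F²`. -/
theorem eigenvalue_perturbation_bound (n : ℕ) (A E : Matrix (Fin n) (Fin n) ℝ)
    (hA : A.IsHermitian) (hAE : (A + E).IsHermitian)
    (lam mu : Fin n → ℝ) (hlam : Monotone lam) (hmu : Monotone mu)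
    (hlamEig : ∃ e : Fin n ≃ Fin n, lam ∘ e = hA.eigenvalues)
    (hmuEig : ∃ e : Fin n ≃ Fin n, mu ∘ e = hAE.eigenvalues) :
    ∑ j, (lam j - mu j) ^ 2 ≤ ‖E‖ ^ 2 := by
  classical
  obtain ⟨e, he⟩ := hlamEig
  obtain ⟨f, hf⟩ := hmuEig
  set lame := hA.eigenvalues with hlame
  set mue := hAE.eigenvalues with hmue
  set U : Matrix (Fin n) (Fin n) ℝ := (hA.eigenvectorUnitary : Matrix (Fin n) (Fin n) ℝ) with hU
  set V : Matrix (Fin n) (Fin n) ℝ := (hAE.eigenvectorUnitary : Matrix (Fin n) (Fin n) ℝ) with hV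
  have hUU : star U * U = 1 := Unitary.star_mul_self_of_mem hA.eigenvectorUnitary.2
  have hUU' : U * star U = 1 := Unitary.mul_star_self_of_mem hA.eigenvectorUnitary.2
  have hVV : star V * V = 1 := Unitary.star_mul_self_of_mem hAE.eigenvectorUnitary.2
  have hVV' : V * star V = 1 := Unitary.mul_star_self_of_mem hAE.eigenvectorUnitary.2
  have hAdec : A = U * Matrix.diagonal lame * star U := by
    have := hA.spectral_theorem
    simpa using this
  have hAEdec : A + E = V * Matrix.diagonal mue * star V := by
    have := hAE.spectral_theorem
    simpa using this
  set W : Matrix (Fin n) (Fin n) ℝ := star V * U with hW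
  have hWW : star W * W = 1 := by
    rw [hW, StarMul.star_mul, star_star, Matrix.mul_assoc, ← Matrix.mul_assoc V _ _, hVV', Matrix.one_mul,
      hUU]
  have hWW' : W * star W = 1 := by
    rw [hW, StarMul.star_mul, star_star, Matrix.mul_assoc, ← Matrix.mul_assoc U _ _, hUU', Matrix.one_mul,
      hVV]
  set B : Matrix (Fin n) (Fin n) ℝ := star V * E * U with hB
  -- key identity: B = diagonal mue * W - W * diagonal lame
  have hBeq : B = Matrix.diagonal mue * W - W * Matrix.diagonal lame := by
    have hEeq : E = (A + E) - A := (add_sub_cancel_left A E).symm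
    have h1 : star V * (A + E) * U = Matrix.diagonal mue * W := by
      rw [hAEdec]
      simp only [← Matrix.mul_assoc, hVV, Matrix.one_mul, hW]
    have h2 : star V * A * U = W * Matrix.diagonal lame := by
      rw [hAdec]
      simp only [Matrix.mul_assoc, hUU, Matrix.mul_one, hW]
    rw [hB, hEeq, Matrix.mul_sub, Matrix.sub_mul, h1, h2]
  have hBij : ∀ i j, B i j = (mue i - lame j) * W i j := by
    intro i j
    rw [hBeq]
    simp [Matrix.sub_apply, Matrix.diagonal_mul, Matrix.mul_diagonal]
    ring
  -- sum of squares of B equals sum of squares of E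
  have hsumBE : ∑ i, ∑ j, (B i j) ^ 2 = ∑ i, ∑ j, (E i j) ^ 2 := by
    rw [hw_sum_sq_eq_trace, hw_sum_sq_eq_trace]
    have hBH : Bᴴ = star U * Eᴴ * V := by
      rw [hB, Matrix.conjTranspose_mul, Matrix.conjTranspose_mul, ← Matrix.star_eq_conjTranspose U,
        ← Matrix.star_eq_conjTranspose (star V), star_star, Matrix.mul_assoc]
    have : Bᴴ * B = star U * (Eᴴ * E) * U := by
      rw [hBH, hB]
      calc star U * Eᴴ * V * (star V * E * U)
          = star U * Eᴴ * (V * star V) * (E * U) := by simp only [Matrix.mul_assoc]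
        _ = star U * (Eᴴ * E) * U := by
            rw [hVV', Matrix.mul_one]; simp only [Matrix.mul_assoc]
    rw [this, Matrix.trace_mul_cycle, ← Matrix.mul_assoc, hUU', Matrix.one_mul]
  -- S is doubly stochastic
  set S : Matrix (Fin n) (Fin n) ℝ := fun i j => (W i j) ^ 2 with hS
  have hSds : S ∈ doublyStochastic ℝ (Fin n) := by
    rw [mem_doublyStochastic_iff_sum]
    refine ⟨fun i j => sq_nonneg _, fun i => ?_, fun j => ?_⟩
    · have := congrFun (congrFun hWW' i) i
      simp only [Matrix.mul_apply, Matrix.one_apply_eq, Matrix.star_apply, star_trivial] at this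
      rw [← this]
      exact Finset.sum_congr rfl fun j _ => by simp only [hS]; ring
    · have := congrFun (congrFun hWW j) j
      simp only [Matrix.mul_apply, Matrix.one_apply_eq, Matrix.star_apply, star_trivial] at this
      rw [← this]
      exact Finset.sum_congr rfl fun i _ => by simp only [hS]; ring
  -- Birkhoff decomposition
  obtain ⟨w, hw0, hw1, hwS⟩ := exists_eq_sum_perm_of_mem_doublyStochastic hSds
  -- per-permutation lower bound
  have hperm : ∀ σ : Equiv.Perm (Fin n),
      ∑ j, (lam j - mu j) ^ 2 ≤ ∑ i, (mue i - lame (σ i)) ^ 2 := by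
    intro σ
    have hre : ∀ i, mue i = mu (f i) := fun i => (congrFun hf i).symm
    have hle : ∀ j, lame j = lam (e j) := fun j => (congrFun he j).symm
    set τ : Equiv.Perm (Fin n) := (f.symm.trans σ).trans e with hτ
    have : ∑ i, (mue i - lame (σ i)) ^ 2 = ∑ k, (lam (τ k) - mu k) ^ 2 := by
      rw [← Equiv.sum_comp f.symm (fun i => (mue i - lame (σ i)) ^ 2)]
      apply Finset.sum_congr rfl
      intro k _
      rw [hre, hle]
      simp only [hτ, Equiv.trans_apply, Equiv.apply_symm_apply]
      ring
    rw [this]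
    exact hw_rearrange lam mu hlam hmu τ
  -- combine
  have hSsum : ∀ i j, S i j = ∑ σ : Equiv.Perm (Fin n), w σ * (σ.permMatrix ℝ) i j := by
    intro i j
    rw [← hwS]
    simp [Matrix.sum_apply, Matrix.smul_apply, smul_eq_mul]
  have hmain : ∑ j, (lam j - mu j) ^ 2 ≤ ∑ i, ∑ j, S i j * (mue i - lame j) ^ 2 := by
    have hinner : ∀ i, ∑ j, S i j * (mue i - lame j) ^ 2
        = ∑ σ : Equiv.Perm (Fin n), w σ * ((σ.permMatrix ℝ) i ⬝ᵥ fun j => (mue i - lame j) ^ 2) := by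
      intro i
      simp only [hSsum, Finset.sum_mul, dotProduct, Finset.mul_sum, mul_assoc]
      exact Finset.sum_comm
    calc ∑ j, (lam j - mu j) ^ 2
        = ∑ σ : Equiv.Perm (Fin n), w σ * ∑ j, (lam j - mu j) ^ 2 := by
          rw [← Finset.sum_mul, hw1, one_mul]
      _ ≤ ∑ σ : Equiv.Perm (Fin n), w σ * ∑ i, (mue i - lame (σ i)) ^ 2 := by
          apply Finset.sum_le_sum
          intro σ _
          exact mul_le_mul_of_nonneg_left (hperm σ) (hw0 σ)
      _ = ∑ σ : Equiv.Perm (Fin n), ∑ i, w σ * ((σ.permMatrix ℝ) i ⬝ᵥ fun j => (mue i - lame j) ^ 2) := by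
          apply Finset.sum_congr rfl
          intro σ _
          rw [Finset.mul_sum]
          apply Finset.sum_congr rfl
          intro i _
          congr 1
          simp [dotProduct, Equiv.Perm.permMatrix, PEquiv.toMatrix_apply,
            Equiv.toPEquiv_apply, ite_mul, Finset.sum_ite_eq]
      _ = ∑ i, ∑ j, S i j * (mue i - lame j) ^ 2 := by
          rw [Finset.sum_comm]
          exact (Finset.sum_congr rfl fun i _ => (hinner i).symm)
  -- finish: RHS equals ‖E‖^2
  have hnorm : ‖E‖ ^ 2 = ∑ i, ∑ j, (E i j) ^ 2 := by
    have hnn : (0:ℝ) ≤ ∑ i, ∑ j, ‖E i j‖ ^ (2:ℝ) := by positivity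
    rw [Matrix.frobenius_norm_def, ← Real.rpow_natCast _ 2, ← Real.rpow_mul hnn]
    norm_num
  have hSB : ∑ i, ∑ j, S i j * (mue i - lame j) ^ 2 = ∑ i, ∑ j, (B i j) ^ 2 := by
    apply Finset.sum_congr rfl
    intro i _
    apply Finset.sum_congr rfl
    intro j _
    rw [hBij, mul_pow, hS]
    ring
  rw [hnorm, ← hsumBE, ← hSB]
  exact hmain
end

section
/- Let Z ∈ ℝ^{n×r}, set S = I_r + ZᵀZ, and let V ∈ ℝ^{n×r} with ‖V‖_F ≤ 1. Let C be the unique solution of S^{1/2} C + C S^{1/2} = −S^{-1/2}(VᵀZ + ZᵀV)S^{-1/2}. Then ‖S^{1/2} C‖_F ≤ min{‖Z‖_F, 1}. -/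
open Matrix Finset

attribute [local instance] Matrix.frobeniusNormedAddCommGroup

/-- The positive semidefinite square root of a positive semidefinite matrix
(the definition `Matrix.PosSemidef.sqrt` of Mathlib, December 2024). -/
noncomputable def Matrix.PosSemidef.sqrt {n : Type*} [Fintype n] [DecidableEq n] {𝕜 : Type*}
    [RCLike 𝕜] [PartialOrder 𝕜] {A : Matrix n n 𝕜} (hA : A.PosSemidef) : Matrix n n 𝕜 :=
  hA.1.eigenvectorUnitary.1 * diagonal ((↑) ∘ (√·) ∘ hA.1.eigenvalues) *
    (star hA.1.eigenvectorUnitary : Matrix n n 𝕜)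



lemma frob_sq {m k : Type*} [Fintype m] [Fintype k] (A : Matrix m k ℝ) :
    ‖A‖^2 = ∑ i, ∑ j, (A i j)^2 := by
  rw [Matrix.frobenius_norm_def]
  rw [← Real.rpow_natCast _ 2, ← Real.rpow_mul (by positivity)]
  norm_num

lemma sum_sq_eq_trace {m k : Type*} [Fintype m] [Fintype k] (B : Matrix m k ℝ) :
    ∑ i, ∑ j, (B i j)^2 = (Bᵀ * B).trace := by
  simp [Matrix.trace, Matrix.mul_apply, Matrix.diag, sq]
  exact Finset.sum_comm

lemma bessel_aux {n r : ℕ} (p : Fin r → Fin n → ℝ) (t : Fin r → ℝ)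
    (hortho : ∀ i j, ∑ k, p i k * p j k = if i = j then t i else 0)
    (q : Fin n → ℝ) :
    ∑ j, (if _ : t j = 0 then (0:ℝ) else (∑ k, q k * p j k) / Real.sqrt (t j))^2
      ≤ ∑ k, q k ^ 2 := by
  have ht : ∀ j, 0 ≤ t j := by
    intro j
    have := hortho j j
    simp at this
    rw [← this]
    exact Finset.sum_nonneg fun k _ => mul_self_nonneg _
  set x : EuclideanSpace ℝ (Fin n) := WithLp.toLp 2 (fun k => q k) with hx
  set v : {j : Fin r // t j ≠ 0} → EuclideanSpace ℝ (Fin n) :=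
    fun j => WithLp.toLp 2 (fun k => p j.1 k / Real.sqrt (t j.1)) with hv
  have hvinner : ∀ (j : {j : Fin r // t j ≠ 0}), (inner ℝ (v j) x : ℝ)
      = (∑ k, q k * p j.1 k) / Real.sqrt (t j.1) := by
    intro j
    simp only [hv, hx, PiLp.inner_apply, RCLike.inner_apply, starRingEnd_apply, star_trivial]
    rw [Finset.sum_div]
    exact Finset.sum_congr rfl fun k _ => by ring
  have hvon : Orthonormal ℝ v := by
    rw [orthonormal_iff_ite]
    intro i j
    have hinner : (inner ℝ (v i) (v j) : ℝ)
        = (∑ k, p i.1 k * p j.1 k) / (Real.sqrt (t i.1) * Real.sqrt (t j.1)) := by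
      simp only [hv, PiLp.inner_apply, RCLike.inner_apply, starRingEnd_apply, star_trivial]
      rw [Finset.sum_div]
      exact Finset.sum_congr rfl fun k _ => by field_simp
    rw [hinner, hortho]
    by_cases hij : i = j
    · subst hij
      simp only [if_pos rfl]
      rw [Real.mul_self_sqrt (ht i.1)]
      exact div_self i.2
    · have : i.1 ≠ j.1 := fun h => hij (Subtype.ext h)
      simp [this, hij]
  have hbessel := hvon.sum_inner_products_le (𝕜 := ℝ) (s := Finset.univ) x
  have hnorm : ‖x‖^2 = ∑ k, q k ^ 2 := by
    rw [EuclideanSpace.norm_eq, Real.sq_sqrt (by positivity)]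
    simp [hx, sq_abs]
  rw [hnorm] at hbessel
  refine le_trans (le_of_eq ?_) hbessel
  calc ∑ j, (if _ : t j = 0 then (0:ℝ) else (∑ k, q k * p j k) / Real.sqrt (t j))^2
      = ∑ j ∈ Finset.univ.filter (fun j => t j ≠ 0),
        (if _ : t j = 0 then (0:ℝ) else (∑ k, q k * p j k) / Real.sqrt (t j))^2 := by
        rw [Finset.sum_filter]
        refine Finset.sum_congr rfl fun j _ => ?_
        by_cases h : t j = 0 <;> simp [h]
    _ = ∑ j : {j : Fin r // t j ≠ 0},
        (if _ : t j.1 = 0 then (0:ℝ) else (∑ k, q k * p j.1 k) / Real.sqrt (t j.1))^2 :=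
        Finset.sum_subtype _ (by simp) _
    _ = ∑ j : {j : Fin r // t j ≠ 0}, ‖(inner ℝ (v j) x : ℝ)‖^2 := by
        refine Finset.sum_congr rfl fun j _ => ?_
        rw [dif_neg j.2, hvinner j, Real.norm_eq_abs, sq_abs]

lemma sc1 (a b σi σj di dj : ℝ) (hσi : 0 ≤ σi) (hσj : 0 ≤ σj)
    (hdi : 1 ≤ di) (hdj : 1 ≤ dj) (hσidi : σi ≤ di) (hσjdj : σj ≤ dj) :
    ((a*σj + b*σi)/(dj*(di+dj)))^2
      ≤ a^2*(σj/(dj*(di+dj))) + b^2*(σi/(dj*(di+dj))) := by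
  have he : (0:ℝ) < dj*(di+dj) := by nlinarith
  have h2 : σi + σj ≤ dj*(di+dj) := by nlinarith
  have hY : 0 ≤ a^2*σj + b^2*σi := by positivity
  have key : (a*σj + b*σi)^2 ≤ (a^2*σj+b^2*σi) * (dj*(di+dj)) := by
    nlinarith [mul_nonneg (mul_nonneg hσi hσj) (sq_nonneg (a-b)),
      mul_le_mul_of_nonneg_left h2 hY]
  have hrw : a^2*(σj/(dj*(di+dj))) + b^2*(σi/(dj*(di+dj)))
      = ((a^2*σj+b^2*σi) * (dj*(di+dj)))/(dj*(di+dj))^2 := by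
    field_simp
  rw [div_pow, hrw, div_le_div_iff_of_pos_right (by positivity)]
  exact key

lemma sc2 (a b σi σj di dj : ℝ) (hdi : 1 ≤ di) (hdj : 1 ≤ dj) :
    ((a*σj + b*σi)/(dj*(di+dj)))^2 ≤ (a^2*σj^2 + b^2*σi^2)/2 := by
  have he : (2:ℝ) ≤ dj*(di+dj) := by nlinarith
  have he0 : (0:ℝ) < dj*(di+dj) := by linarith
  have hY : (0:ℝ) ≤ a^2*σj^2+b^2*σi^2 := by positivity
  have he2 : (4:ℝ) ≤ (dj*(di+dj))^2 := by nlinarith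
  have h1 : (a*σj + b*σi)^2 ≤ 2*(a^2*σj^2+b^2*σi^2) := by nlinarith [sq_nonneg (a*σj - b*σi)]
  rw [div_pow, div_le_div_iff₀ (by positivity) (by norm_num)]
  nlinarith [mul_le_mul_of_nonneg_left he2 hY]

lemma sc3 (σ di dj : ℝ) (hσ : 0 ≤ σ) (hσdj : σ ≤ dj) (hdi : 1 ≤ di) (hdj : 1 ≤ dj) :
    σ/(dj*(di+dj)) + σ/(di*(dj+di)) ≤ 1 := by
  have h1 : σ/(dj*(di+dj)) + σ/(di*(dj+di)) = σ/(di*dj) := by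
    rw [add_comm dj di]
    field_simp
  rw [h1, div_le_one (by nlinarith)]
  nlinarith

lemma conj_conj {r : ℕ} {U : Matrix (Fin r) (Fin r) ℝ} (hU1 : Uᵀ * U = 1)
    (A B : Matrix (Fin r) (Fin r) ℝ) :
    (U * A * Uᵀ) * (U * B * Uᵀ) = U * (A * B) * Uᵀ := by
  have h : (U * A * Uᵀ) * (U * B * Uᵀ) = U * (A * ((Uᵀ * U) * (B * Uᵀ))) := by
    simp only [Matrix.mul_assoc]
  rw [h, hU1, Matrix.one_mul, ← Matrix.mul_assoc, ← Matrix.mul_assoc,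
    Matrix.mul_assoc U A B]

lemma trace_conj {r : ℕ} {U : Matrix (Fin r) (Fin r) ℝ} (hU2 : U * Uᵀ = 1)
    (A : Matrix (Fin r) (Fin r) ℝ) : (Uᵀ * A * U).trace = A.trace := by
  rw [Matrix.trace_mul_cycle, hU2, Matrix.one_mul]

lemma conj_eq_diag {r : ℕ} (U A C D D' M : Matrix (Fin r) (Fin r) ℝ)
    (hU1 : Uᵀ * U = 1)
    (hA : A = U * D * Uᵀ) (hB : A⁻¹ = U * D' * Uᵀ)
    (hC : A * C + C * A = -(A⁻¹ * M * A⁻¹)) :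
    D * (Uᵀ * C * U) + (Uᵀ * C * U) * D = -(D' * (Uᵀ * M * U) * D') := by
  have hUA : Uᵀ * A = D * Uᵀ := by
    rw [hA, ← Matrix.mul_assoc, ← Matrix.mul_assoc, hU1, Matrix.one_mul]
  have hAU : A * U = U * D := by
    rw [hA, Matrix.mul_assoc, hU1, Matrix.mul_one]
  have hUB : Uᵀ * A⁻¹ = D' * Uᵀ := by
    rw [hB, ← Matrix.mul_assoc, ← Matrix.mul_assoc, hU1, Matrix.one_mul]
  have hBU : A⁻¹ * U = U * D' := by
    rw [hB, Matrix.mul_assoc, hU1, Matrix.mul_one]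
  have h := congrArg (fun W => Uᵀ * W * U) hC
  simp only [Matrix.mul_add, Matrix.add_mul, Matrix.mul_neg, Matrix.neg_mul] at h
  have e1 : Uᵀ * (A * C) * U = D * (Uᵀ * C * U) := by
    rw [← Matrix.mul_assoc Uᵀ A C, hUA]
    simp only [Matrix.mul_assoc]
  have e2 : Uᵀ * (C * A) * U = (Uᵀ * C * U) * D := by
    rw [← Matrix.mul_assoc Uᵀ C A, Matrix.mul_assoc (Uᵀ * C) A U, hAU, ← Matrix.mul_assoc]
  have e3 : Uᵀ * (A⁻¹ * M * A⁻¹) * U = D' * (Uᵀ * M * U) * D' := by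
    rw [← Matrix.mul_assoc Uᵀ _ A⁻¹, ← Matrix.mul_assoc Uᵀ A⁻¹ M, hUB,
      Matrix.mul_assoc _ A⁻¹ U, hBU]
    simp only [Matrix.mul_assoc]
  rw [← e1, ← e2, ← e3]
  exact h

lemma conj_conj2 {r : ℕ} {U : Matrix (Fin r) (Fin r) ℝ} (hU2 : U * Uᵀ = 1)
    (A B : Matrix (Fin r) (Fin r) ℝ) :
    (Uᵀ * A * U) * (Uᵀ * B * U) = Uᵀ * (A * B) * U := by
  have h : (Uᵀ * A * U) * (Uᵀ * B * U) = Uᵀ * (A * ((U * Uᵀ) * (B * U))) := by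
    simp only [Matrix.mul_assoc]
  rw [h, hU2, Matrix.one_mul, ← Matrix.mul_assoc, ← Matrix.mul_assoc,
    Matrix.mul_assoc Uᵀ A B]

/-- Let `S = I + ZᵀZ`, `‖V‖_F ≤ 1`, and let `C` solve
`S^{1/2} C + C S^{1/2} = -S^{-1/2}(VᵀZ + ZᵀV)S^{-1/2}`. Then
`‖S^{1/2} C‖_F ≤ min {‖Z‖_F, 1}`. -/
theorem stiefel_sylvester_solution_bound (n r : ℕ) (Z V : Matrix (Fin n) (Fin r) ℝ)
    (hV : ‖V‖ ≤ 1) (hS : Matrix.PosSemidef (1 + Zᵀ * Z))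
    (C : Matrix (Fin r) (Fin r) ℝ)
    (hC : hS.sqrt * C + C * hS.sqrt =
      -((hS.sqrt)⁻¹ * (Vᵀ * Z + Zᵀ * V) * (hS.sqrt)⁻¹)) :
    ‖hS.sqrt * C‖ ≤ min ‖Z‖ 1 := by
  classical
  set U : Matrix (Fin r) (Fin r) ℝ := (hS.1.eigenvectorUnitary : Matrix (Fin r) (Fin r) ℝ)
    with hUdef
  set μ : Fin r → ℝ := hS.1.eigenvalues with hμdef
  have hstar : star U = Uᵀ := Matrix.conjTranspose_eq_transpose_of_trivial U
  have hU1 : Uᵀ * U = 1 := by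
    rw [← hstar]; exact (Unitary.mem_iff.mp hS.1.eigenvectorUnitary.2).1
  have hU2 : U * Uᵀ = 1 := by
    rw [← hstar]; exact (Unitary.mem_iff.mp hS.1.eigenvectorUnitary.2).2
  have hdiagS : Uᵀ * (1 + Zᵀ * Z) * U = diagonal μ := by
    rw [← hstar]
    have h := hS.1.conjStarAlgAut_star_eigenvectorUnitary
    rw [Unitary.conjStarAlgAut_apply] at h
    simpa using h
  set d : Fin r → ℝ := fun i => Real.sqrt (μ i) with hddef
  have hsqrt : hS.sqrt = U * diagonal d * Uᵀ := by
    rw [← hstar]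
    show (hS.1.eigenvectorUnitary.1 * diagonal (RCLike.ofReal ∘ Real.sqrt ∘ hS.1.eigenvalues) *
      star hS.1.eigenvectorUnitary.1 : Matrix (Fin r) (Fin r) ℝ) = _
    congr 1
  set P : Matrix (Fin n) (Fin r) ℝ := Z * U with hPdef
  set Q : Matrix (Fin n) (Fin r) ℝ := V * U with hQdef
  set t : Fin r → ℝ := fun j => μ j - 1 with htdef
  -- P^T P = diagonal t
  have hPtP : Pᵀ * P = diagonal t := by
    have h1 : Pᵀ * P = Uᵀ * (Zᵀ * Z) * U := by
      rw [hPdef, Matrix.transpose_mul]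
      simp only [Matrix.mul_assoc]
    have h2 : Uᵀ * (Zᵀ * Z) * U = Uᵀ * (1 + Zᵀ * Z) * U - Uᵀ * U := by
      simp only [Matrix.mul_add, Matrix.add_mul, Matrix.mul_one]
      abel
    rw [h1, h2, hdiagS, hU1]
    rw [← Matrix.diagonal_one, Matrix.diagonal_sub]
  have hPo : ∀ i j, ∑ k, P k i * P k j = if i = j then t i else 0 := by
    intro i j
    have h := congrArg (fun W => W i j) hPtP
    simpa [Matrix.mul_apply, Matrix.transpose_apply, Matrix.diagonal_apply] using h
  have ht0 : ∀ j, 0 ≤ t j := by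
    intro j
    have h := hPo j j
    simp at h
    rw [← h]
    exact Finset.sum_nonneg fun k _ => mul_self_nonneg _
  have hμ1 : ∀ j, 1 ≤ μ j := by
    intro j
    have := ht0 j
    simp only [htdef] at this
    linarith
  have hd1 : ∀ j, 1 ≤ d j := by
    intro j
    rw [hddef, ← Real.sqrt_one]
    exact Real.sqrt_le_sqrt (hμ1 j)
  have hd0 : ∀ j, d j ≠ 0 := fun j => by have := hd1 j; linarith
  set σ : Fin r → ℝ := fun j => Real.sqrt (t j) with hσdef
  have hσ0 : ∀ j, 0 ≤ σ j := fun j => Real.sqrt_nonneg _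
  have hσd : ∀ j, σ j ≤ d j := by
    intro j
    rw [hσdef, hddef]
    exact Real.sqrt_le_sqrt (by simp only [htdef]; linarith)
  have hσsq : ∀ j, σ j ^ 2 = t j := fun j => Real.sq_sqrt (ht0 j)
  -- the inverse of the square root
  set D : Matrix (Fin r) (Fin r) ℝ := diagonal d with hDdef
  set D' : Matrix (Fin r) (Fin r) ℝ := diagonal (fun i => (d i)⁻¹) with hD'def
  have hinv : (hS.sqrt)⁻¹ = U * D' * Uᵀ := by
    apply Matrix.inv_eq_right_inv
    rw [hsqrt, conj_conj hU1]
    have : D * D' = 1 := by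
      rw [hDdef, hD'def, Matrix.diagonal_mul_diagonal]
      have : (fun i => d i * (d i)⁻¹) = fun _ => (1:ℝ) :=
        funext fun i => mul_inv_cancel₀ (hd0 i)
      rw [this, Matrix.diagonal_one]
    rw [this, Matrix.mul_one, hU2]
  -- conjugated equation
  set Ct : Matrix (Fin r) (Fin r) ℝ := Uᵀ * C * U with hCtdef
  set Mt : Matrix (Fin r) (Fin r) ℝ := Uᵀ * (Vᵀ * Z + Zᵀ * V) * U with hMtdef
  have hCt : D * Ct + Ct * D = -(D' * Mt * D') :=
    conj_eq_diag U hS.sqrt C D D' (Vᵀ * Z + Zᵀ * V) hU1 hsqrt hinv hC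
  -- entries of Mt
  have hMte : ∀ i j, Mt i j = (∑ k, Q k i * P k j) + (∑ k, P k i * Q k j) := by
    intro i j
    have h1 : Mt = Qᵀ * P + Pᵀ * Q := by
      rw [hMtdef, hQdef, hPdef, Matrix.transpose_mul, Matrix.transpose_mul]
      simp only [Matrix.mul_add, Matrix.add_mul]
      simp only [Matrix.mul_assoc]
    rw [h1]
    simp [Matrix.mul_apply, Matrix.add_apply, Matrix.transpose_apply]
  -- columns with t j = 0 vanish
  have hPcol : ∀ j, t j = 0 → ∀ k, P k j = 0 := by
    intro j hj k
    have h := hPo j j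
    simp [hj] at h
    have := (Finset.sum_eq_zero_iff_of_nonneg (fun k _ => mul_self_nonneg (P k j))).mp h
    exact mul_self_eq_zero.mp (this k (Finset.mem_univ k))
  -- the coefficients a
  set a : Fin r → Fin r → ℝ :=
    fun i j => if _ : t j = 0 then (0:ℝ) else (∑ k, Q k i * P k j) / Real.sqrt (t j) with hadef
  have hα : ∀ i j, (∑ k, Q k i * P k j) = a i j * σ j := by
    intro i j
    by_cases h : t j = 0
    · rw [hadef]
      simp only [dif_pos h]
      rw [zero_mul]
      exact Finset.sum_eq_zero fun k _ => by rw [hPcol j h k, mul_zero]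
    · rw [hadef]
      simp only [dif_neg h]
      rw [hσdef, div_mul_cancel₀]
      exact Real.sqrt_ne_zero'.mpr (lt_of_le_of_ne (ht0 j) (Ne.symm h))
  -- entrywise formula for X tilde
  set x : Fin r → Fin r → ℝ := fun i j => d i * Ct i j with hxdef
  have hxe : ∀ i j, x i j = -((a i j * σ j + a j i * σ i) / (d j * (d i + d j))) := by
    intro i j
    have h := congrArg (fun W => W i j) hCt
    simp only [Matrix.add_apply, Matrix.neg_apply, hDdef, hD'def] at h
    rw [Matrix.diagonal_mul, Matrix.mul_diagonal] at h
    rw [Matrix.mul_diagonal, Matrix.diagonal_mul] at h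
    -- h : d i * Ct i j + Ct i j * d j = -((d i)⁻¹ * Mt i j * (d j)⁻¹)
    have hm : Mt i j = a i j * σ j + a j i * σ i := by
      rw [hMte i j, hα i j]
      congr 1
      rw [← hα j i]
      exact Finset.sum_congr rfl fun k _ => mul_comm _ _
    rw [hm] at h
    have hdi := hd0 i
    have hdj := hd0 j
    have hdij : d i + d j ≠ 0 := by have := hd1 i; have := hd1 j; intro hc; linarith
    rw [hxdef]
    field_simp at h ⊢
    linarith [h]
  -- norm of X via conjugation
  have hUA : Uᵀ * hS.sqrt = D * Uᵀ := by
    rw [hsqrt, ← Matrix.mul_assoc, ← Matrix.mul_assoc, hU1, Matrix.one_mul]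
  have hXt : Uᵀ * (hS.sqrt * C) * U = D * Ct := by
    rw [← Matrix.mul_assoc Uᵀ _ C, hUA, hCtdef]
    simp only [Matrix.mul_assoc]
  have hnormX : ‖hS.sqrt * C‖^2 = ∑ i, ∑ j, (x i j)^2 := by
    rw [frob_sq, sum_sq_eq_trace]
    have h2 : ∑ i, ∑ j, (x i j)^2 = ((D * Ct)ᵀ * (D * Ct)).trace := by
      rw [← sum_sq_eq_trace]
      refine Finset.sum_congr rfl fun i _ => Finset.sum_congr rfl fun j _ => ?_
      rw [hxdef]
      simp only [hDdef, Matrix.diagonal_mul]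
    rw [h2, ← hXt]
    have h3 : (Uᵀ * (hS.sqrt * C) * U)ᵀ = Uᵀ * (hS.sqrt * C)ᵀ * U := by
      rw [Matrix.transpose_mul, Matrix.transpose_mul, Matrix.transpose_transpose,
        ← Matrix.mul_assoc]
    rw [h3, conj_conj2 hU2, trace_conj hU2]
  set T : ℝ := ∑ j, t j with hTdef
  have hT0 : 0 ≤ T := Finset.sum_nonneg fun j _ => ht0 j
  have hT : T = ‖Z‖^2 := by
    have h1 : T = (diagonal t).trace := by
      rw [hTdef, Matrix.trace_diagonal]
    have h2 : Pᵀ * P = Uᵀ * (Zᵀ * Z) * U := by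
      rw [hPdef, Matrix.transpose_mul]
      simp only [Matrix.mul_assoc]
    rw [h1, ← hPtP, h2, trace_conj hU2, frob_sq, sum_sq_eq_trace]
  have hQnorm : ∑ i, ∑ k, (Q k i)^2 ≤ 1 := by
    have h2 : Qᵀ * Q = Uᵀ * (Vᵀ * V) * U := by
      rw [hQdef, Matrix.transpose_mul]
      simp only [Matrix.mul_assoc]
    have h3 : ∑ k, ∑ i, (Q k i)^2 = ‖V‖^2 := by
      rw [sum_sq_eq_trace, h2, trace_conj hU2, ← sum_sq_eq_trace, ← frob_sq]
    have h4 : ∑ i, ∑ k, (Q k i)^2 = ‖V‖^2 := by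
      rw [← h3]
      exact Finset.sum_comm
    rw [h4]
    nlinarith [norm_nonneg V]
  have hbess : ∀ i, ∑ j, (a i j)^2 ≤ ∑ k, (Q k i)^2 := by
    intro i
    have h := bessel_aux (fun j k => P k j) t (fun i' j' => hPo i' j') (fun k => Q k i)
    simpa [hadef] using h
  have haQ : ∑ i, ∑ j, (a i j)^2 ≤ 1 :=
    le_trans (Finset.sum_le_sum fun i _ => hbess i) hQnorm
  -- Bound A : sum ≤ 1
  have hboundA : ∑ i, ∑ j, (x i j)^2 ≤ 1 := by
    have step1 : ∀ i j, (x i j)^2 ≤ (a i j)^2 * (σ j/(d j*(d i+d j)))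
        + (a j i)^2 * (σ i/(d j*(d i+d j))) := by
      intro i j
      rw [hxe i j, neg_sq]
      exact sc1 (a i j) (a j i) (σ i) (σ j) (d i) (d j) (hσ0 i) (hσ0 j) (hd1 i) (hd1 j)
        (hσd i) (hσd j)
    calc ∑ i, ∑ j, (x i j)^2
        ≤ ∑ i, ∑ j, ((a i j)^2 * (σ j/(d j*(d i+d j))) + (a j i)^2 * (σ i/(d j*(d i+d j)))) :=
          Finset.sum_le_sum fun i _ => Finset.sum_le_sum fun j _ => step1 i j
      _ = (∑ i, ∑ j, (a i j)^2 * (σ j/(d j*(d i+d j))))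
          + ∑ i, ∑ j, (a j i)^2 * (σ i/(d j*(d i+d j))) := by
          rw [← Finset.sum_add_distrib]
          exact Finset.sum_congr rfl fun i _ => by rw [← Finset.sum_add_distrib]
      _ = (∑ i, ∑ j, (a i j)^2 * (σ j/(d j*(d i+d j))))
          + ∑ i, ∑ j, (a i j)^2 * (σ j/(d i*(d j+d i))) := by
          congr 1
          exact Finset.sum_comm
      _ = ∑ i, ∑ j, (a i j)^2 * (σ j/(d j*(d i+d j)) + σ j/(d i*(d j+d i))) := by
          rw [← Finset.sum_add_distrib]
          refine Finset.sum_congr rfl fun i _ => ?_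
          rw [← Finset.sum_add_distrib]
          exact Finset.sum_congr rfl fun j _ => by ring
      _ ≤ ∑ i, ∑ j, (a i j)^2 * 1 :=
          Finset.sum_le_sum fun i _ => Finset.sum_le_sum fun j _ =>
            mul_le_mul_of_nonneg_left
              (sc3 (σ j) (d i) (d j) (hσ0 j) (hσd j) (hd1 i) (hd1 j)) (sq_nonneg _)
      _ ≤ 1 := by simpa using haQ
  -- Bound B : sum ≤ T = ‖Z‖²
  have hboundB : ∑ i, ∑ j, (x i j)^2 ≤ T := by
    have step1 : ∀ i j, (x i j)^2 ≤ ((a i j)^2*(σ j)^2 + (a j i)^2*(σ i)^2)/2 := by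
      intro i j
      rw [hxe i j, neg_sq]
      exact sc2 (a i j) (a j i) (σ i) (σ j) (d i) (d j) (hd1 i) (hd1 j)
    calc ∑ i, ∑ j, (x i j)^2
        ≤ ∑ i, ∑ j, ((a i j)^2*(σ j)^2 + (a j i)^2*(σ i)^2)/2 :=
          Finset.sum_le_sum fun i _ => Finset.sum_le_sum fun j _ => step1 i j
      _ = (∑ i, ∑ j, (a i j)^2*(σ j)^2/2) + ∑ i, ∑ j, (a j i)^2*(σ i)^2/2 := by
          rw [← Finset.sum_add_distrib]
          refine Finset.sum_congr rfl fun i _ => ?_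
          rw [← Finset.sum_add_distrib]
          exact Finset.sum_congr rfl fun j _ => by ring
      _ = (∑ i, ∑ j, (a i j)^2*(σ j)^2/2) + ∑ i, ∑ j, (a i j)^2*(σ j)^2/2 := by
          congr 1
          exact Finset.sum_comm
      _ = ∑ i, ∑ j, (a i j)^2 * t j := by
          rw [← Finset.sum_add_distrib]
          refine Finset.sum_congr rfl fun i _ => ?_
          rw [← Finset.sum_add_distrib]
          refine Finset.sum_congr rfl fun j _ => ?_
          rw [← hσsq j]
          ring
      _ ≤ ∑ i, ∑ j, (a i j)^2 * T :=
          Finset.sum_le_sum fun i _ => Finset.sum_le_sum fun j _ =>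
            mul_le_mul_of_nonneg_left
              (Finset.single_le_sum (fun j' _ => ht0 j') (Finset.mem_univ j)) (sq_nonneg _)
      _ = (∑ i, ∑ j, (a i j)^2) * T := by
          rw [Finset.sum_mul]
          exact Finset.sum_congr rfl fun i _ => by rw [Finset.sum_mul]
      _ ≤ 1 * T := mul_le_mul_of_nonneg_right haQ hT0
      _ = T := one_mul T
  refine le_min ?_ ?_
  · have h : ‖hS.sqrt * C‖^2 ≤ ‖Z‖^2 := by
      rw [hnormX, ← hT]
      exact hboundB
    calc ‖hS.sqrt * C‖ = Real.sqrt (‖hS.sqrt * C‖^2) := (Real.sqrt_sq (norm_nonneg _)).symm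
      _ ≤ Real.sqrt (‖Z‖^2) := Real.sqrt_le_sqrt h
      _ = ‖Z‖ := Real.sqrt_sq (norm_nonneg _)
  · have h : ‖hS.sqrt * C‖^2 ≤ 1 := by
      rw [hnormX]
      exact hboundA
    calc ‖hS.sqrt * C‖ = Real.sqrt (‖hS.sqrt * C‖^2) := (Real.sqrt_sq (norm_nonneg _)).symm
      _ ≤ Real.sqrt 1 := Real.sqrt_le_sqrt h
      _ = 1 := Real.sqrt_one
end

section
/- Let β > 0 and let (z_k) be a sequence with 0 < z_k < 1 for all k, satisfying z_k ≥ z_{k+1} + z_{k+1}^{1 + 1/β}. Then z_k ≤ 1/((1 − 2^{-1/β})k + 1)^β for all k ≥ 0. -/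
open Real Set

/-- Chord inequality for the convex function `x ↦ x ^ (-q)` between `x = 1` and `x = 2`. -/
lemma chord_rpow_neg (q s : ℝ) (hq : 0 < q) (hs0 : 0 ≤ s) (hs1 : s ≤ 1) :
    (1 + s) ^ (-q) ≤ 1 - (1 - (2 : ℝ) ^ (-q)) * s := by
  have hpos : (0 : ℝ) < 1 + s := by linarith
  -- log concavity: s * log 2 ≤ log (1 + s)
  have hlog : s * Real.log 2 ≤ Real.log (1 + s) := by
    have := strictConcaveOn_log_Ioi.concaveOn.2 (x := 1) (y := 2)
      (by norm_num : (1:ℝ) ∈ Ioi 0) (by norm_num : (2:ℝ) ∈ Ioi 0)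
      (by linarith : (0:ℝ) ≤ 1 - s) hs0 (by ring)
    rw [show (1 - s) • (1:ℝ) + s • 2 = 1 + s by simp only [smul_eq_mul]; ring] at this
    simpa [smul_eq_mul, Real.log_one] using this
  have h2 : (1 + s) ^ (-q) = Real.exp (Real.log (1 + s) * (-q)) :=
    Real.rpow_def_of_pos hpos _
  have h3 : Real.exp (Real.log (1 + s) * (-q)) ≤ Real.exp (s * Real.log 2 * (-q)) := by
    apply Real.exp_le_exp.2
    nlinarith
  -- convexity of exp: exp ((1-s)*0 + s*t) ≤ (1-s)*exp 0 + s * exp t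
  have h4 : Real.exp (s * Real.log 2 * (-q)) ≤ (1 - s) + s * Real.exp (Real.log 2 * (-q)) := by
    have := convexOn_exp.2 (mem_univ (0 : ℝ)) (mem_univ (Real.log 2 * (-q)))
      (by linarith : (0:ℝ) ≤ 1 - s) hs0 (by ring)
    rw [show s * Real.log 2 * (-q) = s * (Real.log 2 * (-q)) by ring]
    simpa [smul_eq_mul, Real.exp_zero] using this
  have h5 : Real.exp (Real.log 2 * (-q)) = (2 : ℝ) ^ (-q) :=
    (Real.rpow_def_of_pos (by norm_num) _).symm
  rw [h2]
  calc Real.exp (Real.log (1 + s) * (-q)) ≤ (1 - s) + s * (2 : ℝ) ^ (-q) := by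
        rw [← h5]; exact h3.trans h4
    _ = 1 - (1 - (2 : ℝ) ^ (-q)) * s := by ring

/-- Sublinear convergence for the gradient-dominant recursion: if `β > 0`, `z` is positive
with `z 0 < 1` and `z k ≥ z (k+1) + z (k+1)^(1 + 1/β)`, then
`z k ≤ 1 / ((1 - 2^(-1/β)) k + 1)^β` for all `k`. -/
theorem sublinear_rate_of_recursion (β : ℝ) (hβ : 0 < β) (z : ℕ → ℝ)
    (hpos : ∀ k, 0 < z k) (h0 : z 0 < 1)
    (hrec : ∀ k, z (k + 1) + z (k + 1) ^ (1 + 1 / β) ≤ z k) :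
    ∀ k : ℕ, z k ≤ 1 / ((1 - (2 : ℝ) ^ (-1 / β)) * (k : ℝ) + 1) ^ β := by
  set q : ℝ := 1 / β with hqdef
  have hq : 0 < q := by positivity
  have hexp : (-1 : ℝ) / β = -q := by rw [hqdef]; ring
  simp only [hexp]
  set c : ℝ := 1 - (2 : ℝ) ^ (-q) with hcdef
  have h2q : (2 : ℝ) ^ (-q) < 1 :=
    Real.rpow_lt_one_of_one_lt_of_neg one_lt_two (by linarith)
  have h2q0 : (0 : ℝ) < (2 : ℝ) ^ (-q) := Real.rpow_pos_of_pos (by norm_num) _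
  have hc0 : 0 < c := by simp only [hcdef]; linarith
  have hc1 : c < 1 := by simp only [hcdef]; linarith
  -- z is nonincreasing
  have hdec : ∀ k, z (k + 1) ≤ z k := fun k => by
    have := hrec k
    have hp : 0 < z (k + 1) ^ (1 + 1 / β) := Real.rpow_pos_of_pos (hpos _) _
    linarith
  have hlt1 : ∀ k, z k < 1 := by
    intro k
    induction k with
    | zero => exact h0
    | succ n ih => exact lt_of_le_of_lt (hdec n) ih
  -- key induction on w k = z k ^ (-q)
  have hw : ∀ k : ℕ, c * k + 1 ≤ z k ^ (-q) := by
    intro k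
    induction k with
    | zero =>
      simp only [Nat.cast_zero, mul_zero, zero_add]
      have : 1 < z 0 ^ (-q) :=
        (Real.one_lt_rpow_iff_of_pos (hpos 0)).2 (Or.inr ⟨h0, by linarith⟩)
      linarith
    | succ n ih =>
      set s : ℝ := z (n + 1) ^ q with hsdef
      have hs0 : 0 < s := Real.rpow_pos_of_pos (hpos _) _
      have hs1 : s < 1 := Real.rpow_lt_one (hpos _).le (hlt1 _) hq
      have hz : z (n + 1) * (1 + s) ≤ z n := by
        have h1 : z (n + 1) ^ (1 + 1 / β) = z (n + 1) * s := by
          rw [hsdef, hqdef, Real.rpow_add (hpos _), Real.rpow_one]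
        have := hrec n
        rw [h1] at this
        linarith
      have hwn : z n ^ (-q) ≤ (z (n + 1) * (1 + s)) ^ (-q) :=
        Real.rpow_le_rpow_of_nonpos (mul_pos (hpos _) (by linarith)) hz (by linarith)
      have hmul : (z (n + 1) * (1 + s)) ^ (-q) = z (n + 1) ^ (-q) * (1 + s) ^ (-q) :=
        Real.mul_rpow (hpos _).le (by linarith)
      have hwpos : 0 < z (n + 1) ^ (-q) := Real.rpow_pos_of_pos (hpos _) _
      have hchord : (1 + s) ^ (-q) ≤ 1 - c * s := chord_rpow_neg q s hq hs0.le hs1.le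
      have hws : z (n + 1) ^ (-q) * s = 1 := by
        rw [hsdef, ← Real.rpow_add (hpos _), neg_add_cancel, Real.rpow_zero]
      have step : z n ^ (-q) ≤ z (n + 1) ^ (-q) - c := by
        calc z n ^ (-q) ≤ z (n + 1) ^ (-q) * (1 + s) ^ (-q) := by rw [← hmul]; exact hwn
          _ ≤ z (n + 1) ^ (-q) * (1 - c * s) :=
              mul_le_mul_of_nonneg_left hchord hwpos.le
          _ = z (n + 1) ^ (-q) - c * (z (n + 1) ^ (-q) * s) := by ring
          _ = z (n + 1) ^ (-q) - c := by rw [hws, mul_one]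
      push_cast
      linarith
  -- conclude
  intro k
  have hk := hw k
  have hden : (0 : ℝ) < c * k + 1 := by positivity
  have hdenb : (0 : ℝ) < (c * k + 1) ^ β := Real.rpow_pos_of_pos hden _
  have h1 : (c * k + 1) ^ β ≤ (z k ^ (-q)) ^ β :=
    Real.rpow_le_rpow hden.le hk hβ.le
  have h2 : (z k ^ (-q)) ^ β = (z k)⁻¹ := by
    rw [← Real.rpow_mul (hpos k).le, show -q * β = -1 by
      rw [hqdef]; field_simp, Real.rpow_neg_one]
  rw [le_div_iff₀ hdenb]
  have h3 : (c * k + 1) ^ β ≤ (z k)⁻¹ := h2 ▸ h1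
  calc z k * (c * k + 1) ^ β ≤ z k * (z k)⁻¹ :=
        mul_le_mul_of_nonneg_left h3 (hpos k).le
    _ = 1 := mul_inv_cancel₀ (hpos k).ne'
end
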